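/- Let L_1, L_2 ∈ ℝ^{N×N} be simultaneously unitarily triangularizable with real common diagonal entries (λ_1)_i, (λ_2)_i, and let κ = κ_{12} = κ_{21} ∈ ℝ. Then the eigenvalues of the supra-Laplacian [[L_1 + κI, −κI],[−κI, L_2 + κI]] corresponding to index i are real and given by ((λ_1)_i + (λ_2)_i + 2κ)/2 ± (1/2)√(((λ_1)_i − (λ_2)_i)² + 4κ²). -/

import Mathlib

/-!
Conjugating the supra-Laplacian by the block-diagonal unitary `diag(Q, Q)` preserves its
characteristic polynomial, keeps the coupling blocks `-κ I` and turns the diagonal blocks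
into the upper triangular `Qᴴ Lₗ Q + κ I`. Grouping coordinates by their layer index `i`,
the result is block triangular with `2 × 2` diagonal blocks `[[λ₁ᵢ + κ, -κ], [-κ, λ₂ᵢ + κ]]`,
whose characteristic polynomial `(μ - λ₁ᵢ - κ)(μ - λ₂ᵢ - κ) - κ²` has the two stated roots.
-/

open Matrix

namespace Matrix

open Polynomial

variable {R : Type*} [CommRing R] {m : Type*}

theorem charpoly_conj_of_mul_eq_one [Fintype m] [DecidableEq m] {P P' : Matrix m m R}
    (h : P' * P = 1) (M : Matrix m m R) : (P' * M * P).charpoly = M.charpoly := by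
  rw [charpoly_mul_comm, ← Matrix.mul_assoc, mul_eq_one_comm.mp h, Matrix.one_mul]

theorem charpoly_fromBlocks_conj [Fintype m] [DecidableEq m] {P P' : Matrix m m R}
    (h : P' * P = 1) (A B C D : Matrix m m R) :
    (fromBlocks (P' * A * P) (P' * B * P) (P' * C * P) (P' * D * P)).charpoly =
      (fromBlocks A B C D).charpoly := by
  have hdiag : fromBlocks P' 0 0 P' * fromBlocks P 0 0 P = 1 := by
    simp [fromBlocks_multiply, h]
  rw [← charpoly_conj_of_mul_eq_one hdiag (fromBlocks A B C D)]
  simp [fromBlocks_multiply, Matrix.mul_assoc]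

theorem blockTriangular_fromBlocks {α : Type*} [LT α] {b : m → α} {A B C D : Matrix m m R}
    (hA : A.BlockTriangular b) (hB : B.BlockTriangular b) (hC : C.BlockTriangular b)
    (hD : D.BlockTriangular b) : (fromBlocks A B C D).BlockTriangular (Sum.elim b b) := by
  rintro (x | x) (y | y) h
  exacts [hA h, hB h, hC h, hD h]

theorem BlockTriangular.isRoot_charpoly [Fintype m] [DecidableEq m] {α : Type*} [LinearOrder α]
    {b : m → α} {M : Matrix m m R} (hM : M.BlockTriangular b) {x : m} {μ : R}
    (hμ : (M.toSquareBlock b (b x)).charpoly.IsRoot μ) : M.charpoly.IsRoot μ := by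
  rw [hM.charpoly, IsRoot, eval_prod]
  exact Finset.prod_eq_zero (Finset.mem_image_of_mem b (Finset.mem_univ x)) hμ

theorem isRoot_charpoly_fin_two_iff [Nontrivial R] (a b c d μ : R) :
    (!![a, b; c, d]).charpoly.IsRoot μ ↔ (μ - a) * (μ - d) - b * c = 0 := by
  rw [charpoly_fin_two, trace_fin_two, det_fin_two_of, IsRoot.def]
  simp only [of_apply, cons_val', cons_val_zero, cons_val_one, empty_val', cons_val_fin_one,
    eval_add, eval_sub, eval_mul, eval_pow, eval_X, eval_C]
  constructor <;> intro h <;> linear_combination h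

def finTwoEquivFiberSumElimId [DecidableEq m] (i : m) :
    Fin 2 ≃ {x : m ⊕ m // Sum.elim id id x = i} where
  toFun k := if k = 0 then ⟨Sum.inl i, rfl⟩ else ⟨Sum.inr i, rfl⟩
  invFun x := Sum.elim (fun _ => 0) (fun _ => 1) x.1
  left_inv k := by fin_cases k <;> rfl
  right_inv := by rintro ⟨x | x, rfl⟩ <;> rfl

theorem charpoly_toSquareBlock_sumElim_id [Fintype m] [DecidableEq m]
    (M : Matrix (m ⊕ m) (m ⊕ m) R) (i : m) :
    (M.toSquareBlock (Sum.elim id id) i).charpoly =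
      (!![M (.inl i) (.inl i), M (.inl i) (.inr i);
          M (.inr i) (.inl i), M (.inr i) (.inr i)]).charpoly := by
  rw [← charpoly_reindex (finTwoEquivFiberSumElimId i).symm]
  congr 1
  ext k l
  fin_cases k <;> fin_cases l <;> rfl

theorem isRoot_charpoly_fromBlocks_of_isUpperTriangular [Nontrivial R] [Fintype m]
    [LinearOrder m] {A B C D : Matrix m m R} (hA : A.IsUpperTriangular)
    (hB : B.IsUpperTriangular) (hC : C.IsUpperTriangular) (hD : D.IsUpperTriangular) (i : m)
    {μ : R} (hμ : (μ - A i i) * (μ - D i i) - B i i * C i i = 0) :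
    (fromBlocks A B C D).charpoly.IsRoot μ := by
  refine (blockTriangular_fromBlocks hA hB hC hD).isRoot_charpoly (x := .inl i) ?_
  rw [Sum.elim_inl, id, charpoly_toSquareBlock_sumElim_id]
  exact (isRoot_charpoly_fin_two_iff ..).mpr hμ

end Matrix

/-- For a symmetric duplex (κ₁₂ = κ₂₁ = κ) with real layer Schur diagonals, the
eigenvalues corresponding to index i are real and given by the explicit
formula with the square root. -/
theorem supra_laplacian_symmetric_real_eigenvalues (N : ℕ)
    (L₁ L₂ : Matrix (Fin N) (Fin N) ℝ)
    (Q : Matrix (Fin N) (Fin N) ℂ) (hQ : Q ∈ Matrix.unitaryGroup (Fin N) ℂ)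
    (hT₁ : ∀ i j : Fin N, j < i → (Qᴴ * (L₁.map Complex.ofReal) * Q) i j = 0)
    (hT₂ : ∀ i j : Fin N, j < i → (Qᴴ * (L₂.map Complex.ofReal) * Q) i j = 0)
    (lam₁ lam₂ : Fin N → ℝ)
    (hlam₁ : ∀ i, (Qᴴ * (L₁.map Complex.ofReal) * Q) i i = (lam₁ i : ℂ))
    (hlam₂ : ∀ i, (Qᴴ * (L₂.map Complex.ofReal) * Q) i i = (lam₂ i : ℂ))
    (κ : ℝ) :
    ∀ i : Fin N,
      (((Matrix.fromBlocks (L₁ + κ • 1) (-(κ • 1)) (-(κ • 1))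
          (L₂ + κ • 1)).map Complex.ofReal).charpoly.IsRoot
        (((lam₁ i + lam₂ i + 2 * κ) / 2 +
          Real.sqrt ((lam₁ i - lam₂ i) ^ 2 + 4 * κ ^ 2) / 2 : ℝ) : ℂ)) ∧
      (((Matrix.fromBlocks (L₁ + κ • 1) (-(κ • 1)) (-(κ • 1))
          (L₂ + κ • 1)).map Complex.ofReal).charpoly.IsRoot
        (((lam₁ i + lam₂ i + 2 * κ) / 2 -
          Real.sqrt ((lam₁ i - lam₂ i) ^ 2 + 4 * κ ^ 2) / 2 : ℝ) : ℂ)) := by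
  intro i
  set L₁' := L₁.map Complex.ofReal
  set L₂' := L₂.map Complex.ofReal
  set K : Matrix (Fin N) (Fin N) ℂ := (κ : ℂ) • 1
  have hQ' : Qᴴ * Q = 1 := mem_unitaryGroup_iff'.mp hQ
  have hK : K.IsUpperTriangular := by
    simpa only [K, smul_one_eq_diagonal] using blockTriangular_diagonal _
  have hconj : ((fromBlocks (L₁ + κ • 1) (-(κ • 1)) (-(κ • 1)) (L₂ + κ • 1)).map
      Complex.ofReal).charpoly =
        (fromBlocks (Qᴴ * L₁' * Q + K) (-K) (-K) (Qᴴ * L₂' * Q + K)).charpoly := by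
    have hmap : (fromBlocks (L₁ + κ • 1) (-(κ • 1)) (-(κ • 1)) (L₂ + κ • 1)).map Complex.ofReal =
        fromBlocks (L₁' + K) (-K) (-K) (L₂' + K) := by
      simp [L₁', L₂', K, fromBlocks_map, Matrix.map_add, Matrix.map_neg, Matrix.map_smul]
    rw [hmap, ← charpoly_fromBlocks_conj hQ']
    simp [K, Matrix.mul_add, Matrix.add_mul, hQ']
  have hroot : ∀ s : ℝ, s ^ 2 = (lam₁ i - lam₂ i) ^ 2 + 4 * κ ^ 2 →
      (fromBlocks (Qᴴ * L₁' * Q + K) (-K) (-K) (Qᴴ * L₂' * Q + K)).charpoly.IsRoot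
        (((lam₁ i + lam₂ i + 2 * κ) / 2 + s / 2 : ℝ) : ℂ) := by
    intro s hs
    refine isRoot_charpoly_fromBlocks_of_isUpperTriangular (BlockTriangular.add hT₁ hK) hK.neg
      hK.neg (BlockTriangular.add hT₂ hK) i ?_
    have hsC : (s : ℂ) ^ 2 = ((lam₁ i : ℂ) - lam₂ i) ^ 2 + 4 * (κ : ℂ) ^ 2 := by
      exact_mod_cast hs
    simp only [K, Matrix.add_apply, Matrix.neg_apply, Matrix.smul_apply, one_apply_eq, hlam₁,
      hlam₂, smul_eq_mul, mul_one]
    push_cast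
    linear_combination hsC / 4
  have hsqrt := Real.sq_sqrt (by positivity : 0 ≤ (lam₁ i - lam₂ i) ^ 2 + 4 * κ ^ 2)
  rw [hconj]
  refine ⟨hroot _ hsqrt, ?_⟩
  convert hroot _ ((neg_sq _).trans hsqrt) using 3
  ring
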